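/- arXiv:1902.02752 — 3 statements merged into one kernel-verified Lean document; each statement's English description precedes it below -/
import Mathlib

section
/- Suppose the loss l is symmetric and satisfies the triangle inequality (l(a,c) ≤ l(a,b) + l(b,c) for all a,b,c ∈ Y). Let D_S and D_T be probability distributions on X, y : X → Y a labeling function, and for α ∈ [0,1] define L_α(h,y) = α·L_S(h,y) + (1−α)·L_T(h,y). Let h* minimize L_S(h,y) + L_T(h,y) over h ∈ H and set λ = L_S(h*,y) + L_T(h*,y). Then for every h ∈ H: |L_α(h,y) − L_T(h,y)| ≤ α·(disc_H(D_S, D_T) + λ). -/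
open MeasureTheory

private lemma real_biSup_le {ι : Type*} {p : ι → Prop} (f : ι → ℝ) {B : ℝ}
    (hB : 0 ≤ B) (hf : ∀ i, p i → f i ≤ B) : (⨆ i, ⨆ _ : p i, f i) ≤ B := by
  refine Real.iSup_le (fun i => Real.iSup_le (fun hi => hf i hi) hB) hB

private lemma real_le_biSup {ι : Type*} {p : ι → Prop} (f : ι → ℝ) {B : ℝ}
    (hB : 0 ≤ B) (hf : ∀ i, p i → f i ≤ B) {i : ι} (hi : p i) :
    f i ≤ ⨆ j, ⨆ _ : p j, f j := by
  have hbdd : BddAbove (Set.range fun j => ⨆ _ : p j, f j) := by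
    refine ⟨B, ?_⟩
    rintro _ ⟨j, rfl⟩
    by_cases hj : p j
    · simpa [ciSup_pos hj] using hf j hj
    · haveI : IsEmpty (p j) := ⟨fun h => hj h⟩
      show (⨆ _ : p j, f j) ≤ B
      rw [Real.iSup_of_isEmpty]
      exact hB
  calc f i = ⨆ _ : p i, f i := (ciSup_pos (f := fun _ => f i) hi).symm
    _ ≤ ⨆ j, ⨆ _ : p j, f j := le_ciSup hbdd i

private lemma loss_integrable {X : Type*} [MeasurableSpace X] {Y : Type*} [MeasurableSpace Y]
    (l : Y → Y → ℝ) (hl_nonneg : ∀ a b, 0 ≤ l a b)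
    (C : ℝ) (hl_bdd : ∀ a b, l a b ≤ C)
    (hl_meas : Measurable (Function.uncurry l))
    (D : Measure X) [IsProbabilityMeasure D]
    {f g : X → Y} (mf : Measurable f) (mg : Measurable g) :
    Integrable (fun x => l (f x) (g x)) D := by
  have hm : Measurable (fun x => l (f x) (g x)) := hl_meas.comp (mf.prodMk mg)
  refine (integrable_const C).mono' hm.aestronglyMeasurable ?_
  filter_upwards with x
  rw [Real.norm_eq_abs, abs_of_nonneg (hl_nonneg _ _)]
  exact hl_bdd _ _

private lemma loss_key {X : Type*} [MeasurableSpace X] {Y : Type*} [MeasurableSpace Y]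
    (l : Y → Y → ℝ) (hl_nonneg : ∀ a b, 0 ≤ l a b)
    (C : ℝ) (hl_bdd : ∀ a b, l a b ≤ C)
    (hl_meas : Measurable (Function.uncurry l))
    (hl_symm : ∀ a b, l a b = l b a)
    (hl_tri : ∀ a b c, l a c ≤ l a b + l b c)
    (D : Measure X) [IsProbabilityMeasure D]
    {f g w : X → Y} (mf : Measurable f) (mg : Measurable g) (mw : Measurable w) :
    |(∫ x, l (f x) (g x) ∂D) - ∫ x, l (f x) (w x) ∂D| ≤ ∫ x, l (w x) (g x) ∂D := by
  have i1 := loss_integrable l hl_nonneg C hl_bdd hl_meas D mf mg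
  have i2 := loss_integrable l hl_nonneg C hl_bdd hl_meas D mf mw
  have i3 := loss_integrable l hl_nonneg C hl_bdd hl_meas D mw mg
  rw [← integral_sub i1 i2]
  calc |∫ x, (l (f x) (g x) - l (f x) (w x)) ∂D|
      = ‖∫ x, (l (f x) (g x) - l (f x) (w x)) ∂D‖ := (Real.norm_eq_abs _).symm
    _ ≤ ∫ x, ‖l (f x) (g x) - l (f x) (w x)‖ ∂D := norm_integral_le_integral_norm _
    _ = ∫ x, |l (f x) (g x) - l (f x) (w x)| ∂D := by simp [Real.norm_eq_abs]
    _ ≤ ∫ x, l (w x) (g x) ∂D := by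
        refine integral_mono (i1.sub i2).abs i3 fun x => ?_
        rw [abs_sub_le_iff]
        constructor
        · have := hl_tri (f x) (w x) (g x); linarith
        · have := hl_tri (f x) (g x) (w x)
          have h2 := hl_symm (g x) (w x); linarith

/-- Mixed-loss lemma: `|L_α(h,y) − L_T(h,y)| ≤ α (disc_H(D_S,D_T) + λ)`. -/
theorem mixed_loss_bound
    {X : Type*} [MeasurableSpace X] {Y : Type*} [MeasurableSpace Y]
    (l : Y → Y → ℝ) (hl_nonneg : ∀ a b, 0 ≤ l a b)
    (C : ℝ) (hl_bdd : ∀ a b, l a b ≤ C)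
    (hl_meas : Measurable (Function.uncurry l))
    (hl_symm : ∀ a b, l a b = l b a)
    (hl_tri : ∀ a b c, l a c ≤ l a b + l b c)
    (H : Set (X → Y)) (hH : ∀ h ∈ H, Measurable h)
    (DS DT : Measure X) [IsProbabilityMeasure DS] [IsProbabilityMeasure DT]
    (y : X → Y) (hy : Measurable y)
    (L : Measure X → (X → Y) → (X → Y) → ℝ)
    (hL : ∀ (D : Measure X) (h h' : X → Y), L D h h' = ∫ x, l (h x) (h' x) ∂D)
    (disc : ℝ)
    (hdisc : disc = ⨆ h ∈ H, ⨆ h' ∈ H, |L DS h h' - L DT h h'|)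
    (α : ℝ) (hα : α ∈ Set.Icc (0:ℝ) 1)
    (Lα : (X → Y) → ℝ)
    (hLα : ∀ h, Lα h = α * L DS h y + (1 - α) * L DT h y)
    (hstar : X → Y) (hstar_mem : hstar ∈ H)
    (hstar_min : ∀ h ∈ H, L DS hstar y + L DT hstar y ≤ L DS h y + L DT h y)
    (lam : ℝ) (hlam : lam = L DS hstar y + L DT hstar y) :
    ∀ h ∈ H, |Lα h - L DT h y| ≤ α * (disc + lam) := by
  obtain ⟨hα0, hα1⟩ := hα
  set C' : ℝ := max C 0 with hC'
  have hC'0 : 0 ≤ C' := le_max_right _ _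
  have hl_bdd' : ∀ a b, l a b ≤ C' := fun a b => (hl_bdd a b).trans (le_max_left _ _)
  -- bounds on L
  have hLbound : ∀ (D : Measure X) [IsProbabilityMeasure D], ∀ f g : X → Y,
      Measurable f → Measurable g → 0 ≤ L D f g ∧ L D f g ≤ C' := by
    intro D _ f g mf mg
    rw [hL]
    constructor
    · exact integral_nonneg fun x => hl_nonneg _ _
    · calc (∫ x, l (f x) (g x) ∂D) ≤ ∫ _, C' ∂D :=
            integral_mono (loss_integrable l hl_nonneg C' hl_bdd' hl_meas D mf mg)
              (integrable_const C') fun x => hl_bdd' _ _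
        _ = C' := by simp
  have habsbound : ∀ f ∈ H, ∀ g ∈ H, |L DS f g - L DT f g| ≤ C' := by
    intro f hf g hg
    obtain ⟨hS0, hS1⟩ := hLbound DS f g (hH f hf) (hH g hg)
    obtain ⟨hT0, hT1⟩ := hLbound DT f g (hH f hf) (hH g hg)
    rw [abs_sub_le_iff]; constructor <;> linarith
  intro h hh
  have mh := hH h hh
  have mhs := hH hstar hstar_mem
  -- term 2 : discrepancy bound
  have hdisc_nonneg_aux : ∀ g ∈ H, (⨆ h' ∈ H, |L DS g h' - L DT g h'|) ≤ C' := by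
    intro g hg
    exact real_biSup_le _ hC'0 fun g' hg' => habsbound g hg g' hg'
  have hterm2 : |L DS h hstar - L DT h hstar| ≤ disc := by
    rw [hdisc]
    calc |L DS h hstar - L DT h hstar|
        ≤ ⨆ h' ∈ H, |L DS h h' - L DT h h'| :=
          real_le_biSup _ hC'0 (fun g' hg' => habsbound h hh g' hg') hstar_mem
      _ ≤ ⨆ g ∈ H, ⨆ h' ∈ H, |L DS g h' - L DT g h'| :=
          real_le_biSup _ hC'0 hdisc_nonneg_aux hh
  -- term 1 and 3
  have hterm1 : |L DS h y - L DS h hstar| ≤ L DS hstar y := by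
    rw [hL, hL, hL]
    exact loss_key l hl_nonneg C' hl_bdd' hl_meas hl_symm hl_tri DS mh hy mhs
  have hterm3 : |L DT h hstar - L DT h y| ≤ L DT hstar y := by
    rw [abs_sub_comm, hL, hL, hL]
    exact loss_key l hl_nonneg C' hl_bdd' hl_meas hl_symm hl_tri DT mh hy mhs
  have hmain : |L DS h y - L DT h y| ≤ disc + lam := by
    have t1 := abs_sub_le (L DS h y) (L DS h hstar) (L DT h y)
    have t2 := abs_sub_le (L DS h hstar) (L DT h hstar) (L DT h y)
    rw [hlam]
    linarith
  have heq : Lα h - L DT h y = α * (L DS h y - L DT h y) := by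
    rw [hLα]; ring
  rw [heq, abs_mul, abs_of_nonneg hα0]
  exact mul_le_mul_of_nonneg_left hmain hα0
end

section
/- Under the assumptions of the mixed-loss lemma (l symmetric, triangle inequality), for any two hypotheses h, h' ∈ H and any labeling function y: |L_S(h,y) − L_T(h,y)| ≤ L_S(h',y) + |L_S(h',h) − L_T(h',h)| + L_T(h',y). In particular, |L_S(h,y) − L_T(h,y)| ≤ disc_H(D_S, D_T) + L_S(h',y) + L_T(h',y). -/
open MeasureTheory

/-- Chaining step of the mixed-loss lemma:
`|L_S(h,y) − L_T(h,y)| ≤ L_S(h',y) + |L_S(h',h) − L_T(h',h)| + L_T(h',y)`,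
and in particular `|L_S(h,y) − L_T(h,y)| ≤ disc_H(D_S,D_T) + L_S(h',y) + L_T(h',y)`. -/
theorem loss_difference_chaining
    {X : Type*} [MeasurableSpace X] {Y : Type*} [MeasurableSpace Y]
    (l : Y → Y → ℝ) (hl_nonneg : ∀ a b, 0 ≤ l a b)
    (C : ℝ) (hl_bdd : ∀ a b, l a b ≤ C)
    (hl_meas : Measurable (Function.uncurry l))
    (hl_symm : ∀ a b, l a b = l b a)
    (hl_tri : ∀ a b c, l a c ≤ l a b + l b c)
    (H : Set (X → Y)) (hH : ∀ h ∈ H, Measurable h)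
    (DS DT : Measure X) [IsProbabilityMeasure DS] [IsProbabilityMeasure DT]
    (y : X → Y) (hy : Measurable y)
    (L : Measure X → (X → Y) → (X → Y) → ℝ)
    (hL : ∀ (D : Measure X) (h h' : X → Y), L D h h' = ∫ x, l (h x) (h' x) ∂D)
    (disc : ℝ)
    (hdisc : disc = ⨆ h₁ ∈ H, ⨆ h₂ ∈ H, |L DS h₁ h₂ - L DT h₁ h₂|)
    (h h' : X → Y) (hmem : h ∈ H) (hmem' : h' ∈ H) :
    |L DS h y - L DT h y| ≤
        L DS h' y + |L DS h' h - L DT h' h| + L DT h' y ∧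
    |L DS h y - L DT h y| ≤ disc + L DS h' y + L DT h' y := by

  classical
  have meas : ∀ (f g : X → Y), Measurable f → Measurable g →
      Measurable (fun x => l (f x) (g x)) := fun f g hf hg =>
    hl_meas.comp (hf.prodMk hg)
  have integ : ∀ (D : Measure X) [IsFiniteMeasure D], ∀ (f g : X → Y),
      Measurable f → Measurable g → Integrable (fun x => l (f x) (g x)) D := by
    intro D _ f g hf hg
    refine ⟨(meas f g hf hg).aestronglyMeasurable, ?_⟩
    apply MeasureTheory.HasFiniteIntegral.of_bounded (C := C)
    filter_upwards with x
    rw [Real.norm_eq_abs, abs_of_nonneg (hl_nonneg _ _)]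
    exact hl_bdd _ _
  have hL0 : ∀ (D : Measure X) (f g : X → Y), 0 ≤ L D f g := by
    intro D f g
    rw [hL]
    exact integral_nonneg fun x => hl_nonneg _ _
  have hLle : ∀ (D : Measure X) [IsProbabilityMeasure D] (f g : X → Y),
      Measurable f → Measurable g → L D f g ≤ C := by
    intro D _ f g hf hg
    rw [hL]
    calc ∫ x, l (f x) (g x) ∂D ≤ ∫ _, C ∂D :=
          integral_mono (integ D f g hf hg) (integrable_const C) fun x => hl_bdd _ _
      _ = C := by simp
  have hC0 : 0 ≤ C := le_trans (hL0 DS h h) (hLle DS h h (hH h hmem) (hH h hmem))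
  have symmL : ∀ (D : Measure X) (f g : X → Y), L D f g = L D g f := by
    intro D f g
    rw [hL, hL]
    exact integral_congr_ae (Filter.Eventually.of_forall fun x => hl_symm _ _)
  have tri : ∀ (D : Measure X) [IsFiniteMeasure D] (f g k : X → Y), Measurable f → Measurable g →
      Measurable k → L D f k ≤ L D f g + L D g k := by
    intro D _ f g k hf hg hk
    rw [hL, hL, hL, ← integral_add (integ D f g hf hg) (integ D g k hg hk)]
    exact integral_mono (integ D f k hf hk)
      ((integ D f g hf hg).add (integ D g k hg hk)) fun x => hl_tri _ _ _
  have hmh := hH h hmem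
  have hmh' := hH h' hmem'
  -- first inequality
  have t1 : L DS h y ≤ L DS h' h + L DS h' y := by
    have := tri DS h h' y hmh hmh' hy
    rw [symmL DS h h'] at this
    linarith
  have t2 : L DT h' h - L DT h' y ≤ L DT h y := by
    have := tri DT h' y h hmh' hy hmh
    rw [symmL DT y h] at this
    linarith
  have t3 : L DT h y ≤ L DT h' h + L DT h' y := by
    have := tri DT h h' y hmh hmh' hy
    rw [symmL DT h h'] at this
    linarith
  have t4 : L DS h' h - L DS h' y ≤ L DS h y := by
    have := tri DS h' y h hmh' hy hmh
    rw [symmL DS y h] at this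
    linarith
  have habs1 : |L DS h y - L DT h y| ≤
      L DS h' y + |L DS h' h - L DT h' h| + L DT h' y := by
    have d1 := le_abs_self (L DS h' h - L DT h' h)
    have d2 := neg_abs_le (L DS h' h - L DT h' h)
    rw [abs_le]
    constructor <;> linarith
  refine ⟨habs1, ?_⟩
  -- second inequality: the middle term is bounded by disc
  have Fb : ∀ h₁ h₂ : X → Y, Measurable h₁ → Measurable h₂ →
      |L DS h₁ h₂ - L DT h₁ h₂| ≤ C := by
    intro h₁ h₂ hm1 hm2
    have b1 := hL0 DS h₁ h₂
    have b2 := hLle DS h₁ h₂ hm1 hm2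
    have b3 := hL0 DT h₁ h₂
    have b4 := hLle DT h₁ h₂ hm1 hm2
    rw [abs_le]; constructor <;> linarith
  have inner_le : ∀ h₁ : X → Y, Measurable h₁ →
      (⨆ h₂ ∈ H, |L DS h₁ h₂ - L DT h₁ h₂|) ≤ C := by
    intro h₁ hm1
    refine Real.iSup_le (fun h₂ => Real.iSup_le (fun hm2 => ?_) hC0) hC0
    exact Fb h₁ h₂ hm1 (hH h₂ hm2)
  have step1 : |L DS h' h - L DT h' h| ≤ ⨆ h₂ ∈ H, |L DS h' h₂ - L DT h' h₂| := by
    have hb : BddAbove (Set.range fun h₂ => ⨆ _ : h₂ ∈ H, |L DS h' h₂ - L DT h' h₂|) := by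
      refine ⟨C, ?_⟩
      rintro _ ⟨h₂, rfl⟩
      exact Real.iSup_le (fun hm2 => Fb h' h₂ hmh' (hH h₂ hm2)) hC0
    have := le_ciSup hb h
    rwa [ciSup_pos hmem] at this
  have step2 : (⨆ h₂ ∈ H, |L DS h' h₂ - L DT h' h₂|) ≤
      ⨆ h₁ ∈ H, ⨆ h₂ ∈ H, |L DS h₁ h₂ - L DT h₁ h₂| := by
    have hb : BddAbove (Set.range fun h₁ =>
        ⨆ _ : h₁ ∈ H, ⨆ h₂ ∈ H, |L DS h₁ h₂ - L DT h₁ h₂|) := by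
      refine ⟨C, ?_⟩
      rintro _ ⟨h₁, rfl⟩
      exact Real.iSup_le (fun hm1 => inner_le h₁ (hH h₁ hm1)) hC0
    have := le_ciSup hb h'
    rwa [ciSup_pos hmem'] at this
  have hdle : |L DS h' h - L DT h' h| ≤ disc := by
    rw [hdisc]; exact le_trans step1 step2
  linarith
end

section
/- (Main generalization bound.) Let H be a hypothesis class and suppose the loss l is symmetric, obeys the triangle inequality, and takes values in [0,1]. Let a labeled sample of size m be drawn with βm points i.i.d. from D_S and (1−β)m points i.i.d. from D_T, labeled by the true labeling y. Fix α ∈ [0,1], let ĥ be any empirical minimizer of the empirical α-mixed loss L̂_α(·,y) over H, and let h*_T be a minimizer of L_T(·,y) over H. Assume the uniform concentration event E holds: |L̂_α(h,y) − L_α(h,y)| ≤ ε for both h = ĥ and h = h*_T, where ε = sqrt((1/(2m))·(α²/β + (1−α)²/(1−β))·log(2/δ)). Then on event E: (1/2)·|L_T(ĥ,y) − L_T(h*_T,y)| ≤ α·(disc_H(D_S,D_T) + λ) + ε, where λ = min_{h∈H} [L_S(h,y) + L_T(h,y)]. -/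
open MeasureTheory

/-- Main generalization bound (Theorem 1), stated as a deterministic implication
from the concentration event `E`: on `E`,
`(1/2)|L_T(ĥ,y) − L_T(h*_T,y)| ≤ α(disc_H(D_S,D_T) + λ) + ε`. -/
theorem generalization_bound
    {X : Type*} [MeasurableSpace X] {Y : Type*} [MeasurableSpace Y]
    (l : Y → Y → ℝ) (hl_nonneg : ∀ a b, 0 ≤ l a b) (hl_le_one : ∀ a b, l a b ≤ 1)
    (hl_meas : Measurable (Function.uncurry l))
    (hl_symm : ∀ a b, l a b = l b a)
    (hl_tri : ∀ a b c, l a c ≤ l a b + l b c)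
    (H : Set (X → Y)) (hH : ∀ h ∈ H, Measurable h)
    (DS DT : Measure X) [IsProbabilityMeasure DS] [IsProbabilityMeasure DT]
    (y : X → Y) (hy : Measurable y)
    (L : Measure X → (X → Y) → (X → Y) → ℝ)
    (hL : ∀ (D : Measure X) (h h' : X → Y), L D h h' = ∫ x, l (h x) (h' x) ∂D)
    (disc : ℝ)
    (hdisc : disc = ⨆ h ∈ H, ⨆ h' ∈ H, |L DS h h' - L DT h h'|)
    -- sample sizes and mixing parameters
    (m : ℕ) (hm : 0 < m)
    (β : ℝ) (hβ : β ∈ Set.Ioo (0:ℝ) 1)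
    (α : ℝ) (hα : α ∈ Set.Icc (0:ℝ) 1)
    (δ : ℝ) (hδ : δ ∈ Set.Ioo (0:ℝ) 1)
    -- true α-mixed loss
    (Lα : (X → Y) → ℝ)
    (hLα : ∀ h, Lα h = α * L DS h y + (1 - α) * L DT h y)
    -- empirical α-mixed loss on the drawn sample
    (Lhat : (X → Y) → ℝ)
    -- empirical minimizer and target minimizer
    (hhat : X → Y) (hhat_mem : hhat ∈ H)
    (hhat_min : ∀ h ∈ H, Lhat hhat ≤ Lhat h)
    (hstarT : X → Y) (hstarT_mem : hstarT ∈ H)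
    (hstarT_min : ∀ h ∈ H, L DT hstarT y ≤ L DT h y)
    -- joint-error minimizer defining λ
    (hjoint : X → Y) (hjoint_mem : hjoint ∈ H)
    (hjoint_min : ∀ h ∈ H, L DS hjoint y + L DT hjoint y ≤ L DS h y + L DT h y)
    (lam : ℝ) (hlam : lam = L DS hjoint y + L DT hjoint y)
    -- the deviation bound ε
    (ε : ℝ)
    (hε : ε = Real.sqrt ((1 / (2 * m)) * (α ^ 2 / β + (1 - α) ^ 2 / (1 - β)) *
      Real.log (2 / δ)))
    -- the concentration event E
    (hE_hat : |Lhat hhat - Lα hhat| ≤ ε)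
    (hE_star : |Lhat hstarT - Lα hstarT| ≤ ε) :
    (1 / 2 : ℝ) * |L DT hhat y - L DT hstarT y| ≤ α * (disc + lam) + ε := by
  obtain ⟨hα0, hα1⟩ := hα
  have hhat_meas := hH hhat hhat_mem
  have hstar_meas := hH hstarT hstarT_mem
  have hjoint_meas := hH hjoint hjoint_mem
  have meas_comp : ∀ f g : X → Y, Measurable f → Measurable g →
      Measurable (fun x => l (f x) (g x)) := fun f g hf hg =>
    hl_meas.comp (hf.prodMk hg)
  have intg : ∀ (D : Measure X), IsProbabilityMeasure D → ∀ f g : X → Y,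
      Measurable f → Measurable g → Integrable (fun x => l (f x) (g x)) D := by
    intro D hD f g hf hg
    refine ⟨(meas_comp f g hf hg).aestronglyMeasurable, ?_⟩
    apply MeasureTheory.HasFiniteIntegral.of_bounded (C := 1)
    filter_upwards with x
    rw [Real.norm_eq_abs, abs_of_nonneg (hl_nonneg _ _)]
    exact hl_le_one _ _
  have L_nonneg : ∀ (D : Measure X), ∀ f g : X → Y, 0 ≤ L D f g := by
    intro D f g
    rw [hL]
    exact integral_nonneg fun x => hl_nonneg _ _
  have L_le_one : ∀ (D : Measure X), IsProbabilityMeasure D → ∀ f g : X → Y,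
      Measurable f → Measurable g → L D f g ≤ 1 := by
    intro D hD f g hf hg
    rw [hL]
    calc ∫ x, l (f x) (g x) ∂D ≤ ∫ _, (1:ℝ) ∂D :=
          integral_mono (intg D hD f g hf hg) (integrable_const 1) fun x => hl_le_one _ _
      _ = 1 := by simp
  -- triangle inequality at the loss level
  have tri : ∀ (D : Measure X), IsProbabilityMeasure D → ∀ f g : X → Y,
      Measurable f → Measurable g → |L D f y - L D f g| ≤ L D g y := by
    intro D hD f g hf hg
    rw [hL, hL, hL, ← integral_sub (intg D hD f y hf hy) (intg D hD f g hf hg)]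
    calc |∫ x, (l (f x) (y x) - l (f x) (g x)) ∂D|
        ≤ ∫ x, |l (f x) (y x) - l (f x) (g x)| ∂D := by
          simpa using norm_integral_le_integral_norm
            (f := fun x => l (f x) (y x) - l (f x) (g x)) (μ := D)
      _ ≤ ∫ x, l (g x) (y x) ∂D := by
          refine integral_mono ((intg D hD f y hf hy).sub (intg D hD f g hf hg)).abs
            (intg D hD g y hg hy) fun x => ?_
          rw [abs_le]
          constructor
          · have := hl_tri (f x) (y x) (g x)
            rw [hl_symm (y x) (g x)] at this
            linarith
          · have := hl_tri (f x) (g x) (y x)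
            linarith
  -- disc bound
  have habs1 : ∀ a b : X → Y, a ∈ H → b ∈ H → |L DS a b - L DT a b| ≤ 1 := by
    intro a b ha hb
    rw [abs_le]
    constructor
    · have := L_le_one DT ‹_› a b (hH a ha) (hH b hb); have := L_nonneg DS a b; linarith
    · have := L_le_one DS ‹_› a b (hH a ha) (hH b hb); have := L_nonneg DT a b; linarith
  have disc_key : ∀ a ∈ H, ∀ b ∈ H, |L DS a b - L DT a b| ≤ disc := by
    intro a ha b hb
    rw [hdisc]
    have hinner_bdd : ∀ c : X → Y,
        (⨆ _ : c ∈ H, |L DS a c - L DT a c|) ≤ 1 := by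
      intro c
      refine Real.iSup_le (fun hc => habs1 a c ha hc) zero_le_one
    have hbdd1 : BddAbove (Set.range fun c : X → Y =>
        ⨆ _ : c ∈ H, |L DS a c - L DT a c|) :=
      ⟨1, by rintro v ⟨c, rfl⟩; exact hinner_bdd c⟩
    have step1 : |L DS a b - L DT a b| ≤ ⨆ h' ∈ H, |L DS a h' - L DT a h'| := by
      rw [← ciSup_pos (p := b ∈ H) hb (f := fun _ => |L DS a b - L DT a b|)]
      exact le_ciSup hbdd1 b
    refine step1.trans ?_
    have houter_bdd : ∀ c : X → Y,
        (⨆ _ : c ∈ H, ⨆ h' ∈ H, |L DS c h' - L DT c h'|) ≤ 1 := by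
      intro c
      refine Real.iSup_le (fun hc => Real.iSup_le (fun h' => ?_) zero_le_one) zero_le_one
      exact Real.iSup_le (fun hh' => habs1 c h' hc hh') zero_le_one
    have hbdd2 : BddAbove (Set.range fun c : X → Y =>
        ⨆ _ : c ∈ H, ⨆ h' ∈ H, |L DS c h' - L DT c h'|) :=
      ⟨1, by rintro v ⟨c, rfl⟩; exact houter_bdd c⟩
    rw [← ciSup_pos (p := a ∈ H) ha
      (f := fun _ => ⨆ h' ∈ H, |L DS a h' - L DT a h'|)]
    exact le_ciSup hbdd2 a
  -- mixed-loss lemma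
  have mix : ∀ h ∈ H, |Lα h - L DT h y| ≤ α * (disc + lam) := by
    intro h hmem
    have hmeas := hH h hmem
    have e1 : Lα h - L DT h y = α * (L DS h y - L DT h y) := by
      rw [hLα]; ring
    rw [e1, abs_mul, abs_of_nonneg hα0]
    have key : |L DS h y - L DT h y| ≤ disc + lam := by
      have t1 : |L DS h y - L DS h hjoint| ≤ L DS hjoint y :=
        tri DS ‹_› h hjoint hmeas hjoint_meas
      have t2 : |L DT h hjoint - L DT h y| ≤ L DT hjoint y := by
        rw [abs_sub_comm]; exact tri DT ‹_› h hjoint hmeas hjoint_meas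
      have t3 : |L DS h hjoint - L DT h hjoint| ≤ disc :=
        disc_key h hmem hjoint hjoint_mem
      have a1 := abs_sub_le (L DS h y) (L DS h hjoint) (L DT h y)
      have a2 := abs_sub_le (L DS h hjoint) (L DT h hjoint) (L DT h y)
      rw [hlam]; linarith
    exact mul_le_mul_of_nonneg_left key hα0
  have m1 := mix hhat hhat_mem
  have m2 := mix hstarT hstarT_mem
  have hmin := hhat_min hstarT hstarT_mem
  have horder := hstarT_min hhat hhat_mem
  rw [abs_of_nonneg (by linarith : (0:ℝ) ≤ L DT hhat y - L DT hstarT y)]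
  rw [abs_le] at m1 m2 hE_hat hE_star
  linarith [m1.1, m1.2, m2.1, m2.2, hE_hat.1, hE_hat.2, hE_star.1, hE_star.2]
end
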